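/- Assume M is geodesic and let x = ((t_i,a_i,b_i))_{i=1}^n and x̂ = ((t̂_i,â_i,b̂_i))_{i=1}^n be dial-a-ride request sequences of the same length n. Then |Z_D(x) − Z_D(x̂)| ≤ ε_time + 2·ε_pos. (Combined content of the paper's two dial-a-ride lemmas underlying the Theorem that the LADAR-Trust algorithm has competitive ratio 1 + (2 ε_time + 4 ε_pos)/Z^OPT.) -/

import Mathlib

/-- Feasibility of a pair `(σ, T)` for the dial-a-ride request sequence `x`: the schedule
is 1-Lipschitz, stays at the origin at all times `≤ 0`, ends at the origin at time `T`,
and for each request visits its pickup position (no earlier than its release time) and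
afterwards its delivery position (uncapacitated server). -/
def FeasibleD {M : Type*} [MetricSpace M] (o : M) {n : ℕ} (x : Fin n → ℝ × M × M)
    (σ : ℝ → M) (T : ℝ) : Prop :=
  (LipschitzWith 1 σ ∧ ∀ s : ℝ, s ≤ 0 → σ s = o) ∧ 0 ≤ T ∧ σ T = o ∧
    ∀ i : Fin n, ∃ s u : ℝ, (x i).1 ≤ s ∧ s ≤ u ∧ u ≤ T ∧
      σ s = (x i).2.1 ∧ σ u = (x i).2.2

/-- The optimal offline completion time of the dial-a-ride request sequence `x`. -/
noncomputable def ZD {M : Type*} [MetricSpace M] (o : M) {n : ℕ}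
    (x : Fin n → ℝ × M × M) : ℝ :=
  sInf {T : ℝ | ∃ σ : ℝ → M, FeasibleD o x σ T}

/-- The optimal length of a closed dial-a-ride tour for `x`, ignoring release times. -/
noncomputable def LD {M : Type*} [MetricSpace M] (o : M) {n : ℕ}
    (x : Fin n → ℝ × M × M) : ℝ :=
  sInf {S : ℝ | 0 ≤ S ∧ ∃ γ : ℝ → M, LipschitzWith 1 γ ∧ γ 0 = o ∧ γ S = o ∧
    ∀ i : Fin n, ∃ s u : ℝ, 0 ≤ s ∧ s ≤ u ∧ u ≤ S ∧
      γ s = (x i).2.1 ∧ γ u = (x i).2.2}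

/-- `M` is geodesic: any two points are joined by a unit-speed geodesic. -/
def IsGeodesicSpace (M : Type*) [MetricSpace M] : Prop :=
  ∀ a b : M, ∃ γ : ℝ → M, LipschitzWith 1 γ ∧ γ 0 = a ∧ γ (dist a b) = b

/-!
A feasible schedule for `x` is turned into one for `x̂` at a cost of `ε_time + 2 ε_pos`. Delaying
the whole schedule by `ε_time` makes every release time of `x̂` respected. Then, request by
request, at the moment the schedule visits the old pickup (resp. delivery) point it takes a
geodesic round trip to the new one and resumes; this costs twice the distance and preserves
everything the schedule already did, only later. Applying this in both directions bounds
`|Z_D(x) − Z_D(x̂)|`.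
-/

theorem LipschitzWith.ite_le {M : Type*} [PseudoMetricSpace M] {K : NNReal} {f g : ℝ → M}
    (c : ℝ) (hf : LipschitzWith K f) (hg : LipschitzWith K g) (hfg : f c = g c) :
    LipschitzWith K fun t => if t ≤ c then f t else g t := by
  refine .of_dist_le_mul fun x y => ?_
  wlog hxy : x ≤ y generalizing x y
  · rw [dist_comm, dist_comm x y]
    exact this y x (le_of_not_ge hxy)
  by_cases hy : y ≤ c
  · simp only [hxy.trans hy, hy, if_true]
    exact hf.dist_le_mul x y
  by_cases hx : x ≤ c
  · simp only [hx, hy, if_true, if_false]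
    calc dist (f x) (g y) ≤ dist (f x) (f c) + dist (f c) (g y) := dist_triangle _ _ _
      _ = dist (f x) (f c) + dist (g c) (g y) := by rw [hfg]
      _ ≤ K * dist x c + K * dist c y := add_le_add (hf.dist_le_mul x c) (hg.dist_le_mul c y)
      _ = K * dist x y := by
        rw [Real.dist_eq, Real.dist_eq, Real.dist_eq, abs_of_nonpos (by linarith),
          abs_of_nonpos (by linarith), abs_of_nonpos (by linarith)]
        ring
  · simp only [hx, hy, if_false]
    exact hg.dist_le_mul x y

theorem LipschitzWith.comp_sub_const {E M : Type*} [SeminormedAddCommGroup E]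
    [PseudoEMetricSpace M] {K : NNReal} {f : E → M} (hf : LipschitzWith K f) (c : E) :
    LipschitzWith K fun t => f (t - c) := by
  rw [← mul_one K]
  exact hf.comp (IsometryEquiv.subRight c).isometry.lipschitz

section Detour

variable {M : Type*} {σ γ : ℝ → M} {s₀ d : ℝ}

/-- The path `σ`, interrupted at time `s₀` by a round trip of duration `2 * d` along `γ`,
from `γ 0` out to `γ d` and back. -/
noncomputable def detour (σ γ : ℝ → M) (s₀ d t : ℝ) : M :=
  if t ≤ s₀ then σ t else if t ≤ s₀ + 2 * d then γ (d - |t - s₀ - d|) else σ (t - 2 * d)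

noncomputable def detourTime (s₀ d t : ℝ) : ℝ :=
  if t < s₀ then t else t + 2 * d

theorem detour_of_le {t : ℝ} (ht : t ≤ s₀) : detour σ γ s₀ d t = σ t :=
  if_pos ht

theorem detour_add (hd : 0 ≤ d) (hγ₀ : γ 0 = σ s₀) : detour σ γ s₀ d (s₀ + d) = γ d := by
  obtain rfl | hd := hd.eq_or_lt
  · rw [add_zero, detour_of_le le_rfl, hγ₀]
  · rw [detour, if_neg (by linarith), if_pos (by linarith), show s₀ + d - s₀ - d = 0 by ring,
      abs_zero, sub_zero]

theorem detour_detourTime (hd : 0 ≤ d) (hγ₀ : γ 0 = σ s₀) (t : ℝ) :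
    detour σ γ s₀ d (detourTime s₀ d t) = σ t := by
  unfold detourTime
  split_ifs with ht
  · exact detour_of_le ht.le
  push Not at ht
  unfold detour
  split_ifs with h₁ h₂
  · obtain rfl : d = 0 := by linarith
    simp
  · obtain rfl : t = s₀ := by linarith
    rw [show t + 2 * d - t - d = d by ring, abs_of_nonneg hd, sub_self, hγ₀]
  · rw [add_sub_cancel_right]

theorem monotone_detourTime (hd : 0 ≤ d) : Monotone (detourTime s₀ d) := by
  intro a b hab
  unfold detourTime
  split_ifs <;> linarith

theorem le_detourTime (hd : 0 ≤ d) (t : ℝ) : t ≤ detourTime s₀ d t := by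
  unfold detourTime
  split_ifs <;> linarith

theorem detourTime_of_le {t : ℝ} (ht : s₀ ≤ t) : detourTime s₀ d t = t + 2 * d :=
  if_neg ht.not_gt

theorem lipschitzWith_detour [PseudoMetricSpace M] (hσ : LipschitzWith 1 σ)
    (hγ : LipschitzWith 1 γ) (hγ₀ : γ 0 = σ s₀) (hd : 0 ≤ d) : LipschitzWith 1 (detour σ γ s₀ d) := by
  have hround : LipschitzWith 1 fun t : ℝ => d - |t - s₀ - d| := .of_dist_le_mul fun a b => by
    rw [Real.dist_eq, Real.dist_eq, NNReal.coe_one, one_mul, sub_sub_sub_cancel_left]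
    refine (abs_abs_sub_abs_le_abs_sub _ _).trans_eq ?_
    rw [abs_sub_comm]
    congr 1
    ring
  have hout : LipschitzWith 1 fun t => γ (d - |t - s₀ - d|) := by
    rw [← mul_one 1]
    exact hγ.comp hround
  refine hσ.ite_le s₀ (hout.ite_le (s₀ + 2 * d) (hσ.comp_sub_const (2 * d)) ?_) ?_
  · rw [show s₀ + 2 * d - s₀ - d = d by ring, abs_of_nonneg hd, sub_self, hγ₀,
      add_sub_cancel_right]
  · rw [if_pos (by linarith), sub_self, zero_sub, abs_neg, abs_of_nonneg hd, sub_self, hγ₀]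

end Detour

section Feasible

variable {M : Type*} [MetricSpace M] {o : M} {n : ℕ} {x : Fin n → ℝ × M × M} {σ : ℝ → M} {T : ℝ}

theorem FeasibleD.apply_max_zero (h : FeasibleD o x σ T) (t : ℝ) : σ (max t 0) = σ t := by
  rcases le_total t 0 with ht | ht
  · rw [max_eq_right ht, h.1.2 0 le_rfl, h.1.2 t ht]
  · rw [max_eq_left ht]

theorem FeasibleD.delay (h : FeasibleD o x σ T) {ε : ℝ} (hε : 0 ≤ ε) :
    FeasibleD o (fun i => ((x i).1 + ε, (x i).2)) (fun t => σ (t - ε)) (T + ε) := by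
  obtain ⟨⟨hσ, hσo⟩, hT, hσT, hserve⟩ := h
  refine ⟨⟨hσ.comp_sub_const ε, fun t ht => hσo _ (by linarith)⟩, by linarith,
    by simpa using hσT, fun i => ?_⟩
  obtain ⟨s, u, hs, hsu, huT, ha, hb⟩ := hserve i
  exact ⟨s + ε, u + ε, by linarith, by linarith, by linarith, by simpa using ha,
    by simpa using hb⟩

theorem FeasibleD.detour (h : FeasibleD o x σ T) {γ : ℝ → M} {s₀ d : ℝ}
    (hγ : LipschitzWith 1 γ) (hγ₀ : γ 0 = σ s₀) (hd : 0 ≤ d) (hs₀ : 0 ≤ s₀) (hs₀T : s₀ ≤ T) :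
    FeasibleD o x (_root_.detour σ γ s₀ d) (T + 2 * d) := by
  obtain ⟨⟨hσ, hσo⟩, hT, hσT, hserve⟩ := h
  refine ⟨⟨lipschitzWith_detour hσ hγ hγ₀ hd, fun t ht => (detour_of_le (ht.trans hs₀)).trans
    (hσo t ht)⟩, by linarith, ?_, fun i => ?_⟩
  · rw [← detourTime_of_le hs₀T, detour_detourTime hd hγ₀, hσT]
  obtain ⟨s, u, hs, hsu, huT, ha, hb⟩ := hserve i
  refine ⟨detourTime s₀ d s, detourTime s₀ d u, hs.trans (le_detourTime hd s),
    monotone_detourTime hd hsu, ?_, by rw [detour_detourTime hd hγ₀, ha],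
    by rw [detour_detourTime hd hγ₀, hb]⟩
  rw [← detourTime_of_le hs₀T]
  exact monotone_detourTime hd huT

theorem FeasibleD.update (h : FeasibleD o x σ T) (j : Fin n) (r : ℝ × M × M) {s u : ℝ}
    (hs : r.1 ≤ s) (hsu : s ≤ u) (huT : u ≤ T) (ha : σ s = r.2.1) (hb : σ u = r.2.2) :
    FeasibleD o (Function.update x j r) σ T := by
  refine ⟨h.1, h.2.1, h.2.2.1, fun i => ?_⟩
  rcases eq_or_ne i j with rfl | hij
  · rw [Function.update_self]
    exact ⟨s, u, hs, hsu, huT, ha, hb⟩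
  · rw [Function.update_of_ne hij]
    exact h.2.2.2 i

theorem FeasibleD.exists_update (hgeo : IsGeodesicSpace M) (h : FeasibleD o x σ T) (j : Fin n)
    (r : ℝ × M × M) (hr : r.1 ≤ (x j).1) :
    ∃ σ' T', FeasibleD o (Function.update x j r) σ' T' ∧
      T' ≤ T + 2 * (dist (x j).2.1 r.2.1 + dist (x j).2.2 r.2.2) := by
  obtain ⟨s, u, hs, hsu, huT, ha, hb⟩ := h.2.2.2 j
  -- The detours must start at nonnegative times, where the schedule is not pinned at `o`.
  set s₀ := max s 0
  set u₀ := max u 0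
  set d₁ := dist (x j).2.1 r.2.1
  set d₂ := dist (x j).2.2 r.2.2
  have hs₀u₀ : s₀ ≤ u₀ := max_le_max_right 0 hsu
  have hu₀T : u₀ ≤ T := max_le huT h.2.1
  have hd₁ : 0 ≤ d₁ := dist_nonneg
  have hd₂ : 0 ≤ d₂ := dist_nonneg
  obtain ⟨γ₁, hγ₁, hγ₁₀, hγ₁d⟩ := hgeo (x j).2.1 r.2.1
  obtain ⟨γ₂, hγ₂, hγ₂₀, hγ₂d⟩ := hgeo (x j).2.2 r.2.2
  have hγ₁σ : γ₁ 0 = σ s₀ := by rw [hγ₁₀, h.apply_max_zero, ha]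
  have hσ₁u₀ : _root_.detour σ γ₁ s₀ d₁ (u₀ + 2 * d₁) = (x j).2.2 := by
    rw [← detourTime_of_le hs₀u₀, detour_detourTime hd₁ hγ₁σ, h.apply_max_zero, hb]
  have h₁ := h.detour hγ₁ hγ₁σ hd₁ (le_max_right s 0) (hs₀u₀.trans hu₀T)
  have h₂ := h₁.detour hγ₂ (hγ₂₀.trans hσ₁u₀.symm) hd₂ (by positivity) (by linarith)
  refine ⟨_, _, h₂.update j r (s := s₀ + d₁) (u := u₀ + 2 * d₁ + d₂) ?_ (by linarith)
    (by linarith) ?_ ?_, by linarith⟩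
  · linarith [le_max_left s 0]
  · rw [detour_of_le (by linarith), detour_add hd₁ hγ₁σ, hγ₁d]
  · rw [detour_add hd₂ (hγ₂₀.trans hσ₁u₀.symm), hγ₂d]

/-- The position error `ε_pos` between two request sequences. -/
def posError (x y : Fin n → ℝ × M × M) : ℝ :=
  ∑ i, (dist (x i).2.1 (y i).2.1 + dist (x i).2.2 (y i).2.2)

theorem posError_comm (x y : Fin n → ℝ × M × M) : posError x y = posError y x :=
  Finset.sum_congr rfl fun i _ => by rw [dist_comm (x i).2.1, dist_comm (x i).2.2]

theorem FeasibleD.exists_of_release_le (hgeo : IsGeodesicSpace M) (h : FeasibleD o x σ T)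
    {y : Fin n → ℝ × M × M} (hy : ∀ i, (y i).1 ≤ (x i).1) :
    ∃ σ' T', FeasibleD o y σ' T' ∧ T' ≤ T + 2 * posError x y := by
  suffices ∀ S : Finset (Fin n), ∃ σ' T', FeasibleD o (S.piecewise y x) σ' T' ∧
      T' ≤ T + 2 * ∑ i ∈ S, (dist (x i).2.1 (y i).2.1 + dist (x i).2.2 (y i).2.2) by
    simpa only [Finset.piecewise_univ, posError] using this Finset.univ
  intro S
  induction S using Finset.induction_on with
  | empty => exact ⟨σ, T, by simpa using h, by simp⟩
  | insert j S hj ih =>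
    obtain ⟨σ', T', h', hT'⟩ := ih
    have hxj : S.piecewise y x j = x j := Finset.piecewise_eq_of_notMem _ _ _ hj
    obtain ⟨σ'', T'', h'', hT''⟩ := h'.exists_update hgeo j (y j) (hxj ▸ hy j)
    rw [hxj] at hT''
    refine ⟨σ'', T'', by rwa [Finset.piecewise_insert], ?_⟩
    rw [Finset.sum_insert hj]
    linarith

theorem FeasibleD.exists_le_add (hgeo : IsGeodesicSpace M) (h : FeasibleD o x σ T)
    {y : Fin n → ℝ × M × M} {ε : ℝ} (hε : 0 ≤ ε) (hy : ∀ i, (y i).1 ≤ (x i).1 + ε) :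
    ∃ σ' T', FeasibleD o y σ' T' ∧ T' ≤ T + ε + 2 * posError x y :=
  (h.delay hε).exists_of_release_le hgeo hy

theorem feasibleD_const (o : M) : FeasibleD o (fun _ : Fin n => ((0 : ℝ), o, o)) (fun _ => o) 0 :=
  ⟨⟨LipschitzWith.const' o, fun _ _ => rfl⟩, le_rfl, rfl,
    fun _ => ⟨0, 0, le_rfl, le_rfl, le_rfl, rfl, rfl⟩⟩

theorem exists_feasibleD (hgeo : IsGeodesicSpace M) (o : M) (x : Fin n → ℝ × M × M) :
    ∃ σ T, FeasibleD o x σ T := by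
  have hx : ∀ i, (x i).1 ≤ 0 + ∑ k, |(x k).1| := fun i => by
    rw [zero_add]
    exact (le_abs_self _).trans
      (Finset.single_le_sum (f := fun k => |(x k).1|) (fun k _ => abs_nonneg _) (Finset.mem_univ i))
  obtain ⟨σ, T, h, -⟩ := (feasibleD_const o).exists_le_add hgeo
    (Finset.sum_nonneg fun k _ => abs_nonneg (x k).1) hx
  exact ⟨σ, T, h⟩

theorem ZD_le_add (hgeo : IsGeodesicSpace M) (o : M) {x y : Fin n → ℝ × M × M} {ε : ℝ}
    (hε : 0 ≤ ε) (hy : ∀ i, (y i).1 ≤ (x i).1 + ε) :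
    ZD o y ≤ ZD o x + (ε + 2 * posError x y) := by
  obtain ⟨σ₀, T₀, h₀⟩ := exists_feasibleD hgeo o x
  rw [← sub_le_iff_le_add]
  refine le_csInf ⟨T₀, σ₀, h₀⟩ fun T ⟨σ, h⟩ => ?_
  obtain ⟨σ', T', h', hT'⟩ := h.exists_le_add hgeo hε hy
  have : ZD o y ≤ T' := csInf_le ⟨0, fun _ ⟨_, h⟩ => h.2.1⟩ ⟨σ', h'⟩
  linarith

end Feasible

theorem darp_abs_Z_sub_Z_le_general {M : Type*} [MetricSpace M] (o : M)
    (hgeo : IsGeodesicSpace M) {n : ℕ}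
    (x xh : Fin n → ℝ × M × M) :
    |ZD o x - ZD o xh| ≤ (⨆ i, |(xh i).1 - (x i).1|) +
      2 * ∑ i, (dist (xh i).2.1 (x i).2.1 + dist (xh i).2.2 (x i).2.2) := by
  set ε := ⨆ i, |(xh i).1 - (x i).1|
  have hε : ∀ i, |(xh i).1 - (x i).1| ≤ ε := le_ciSup (Set.finite_range _).bddAbove
  have hε₀ : 0 ≤ ε := Real.iSup_nonneg fun i => abs_nonneg _
  have hxh := ZD_le_add hgeo o (x := x) (y := xh) hε₀ fun i => by linarith [(abs_le.mp (hε i)).2]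
  have hx := ZD_le_add hgeo o (x := xh) (y := x) hε₀ fun i => by linarith [(abs_le.mp (hε i)).1]
  rw [posError_comm] at hxh
  change _ ≤ ε + 2 * posError xh x
  rw [abs_sub_le_iff]
  constructor <;> linarith

/-- The optimal offline dial-a-ride completion times of the actual and the predicted
instance differ by at most `ε_time + 2 ε_pos`. -/
theorem darp_abs_Z_sub_Z_le {M : Type*} [MetricSpace M] (o : M)
    (hgeo : IsGeodesicSpace M) {n : ℕ}
    (x xh : Fin n → ℝ × M × M) (hx : ∀ i, 0 ≤ (x i).1) (hxh : ∀ i, 0 ≤ (xh i).1) :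
    |ZD o x - ZD o xh| ≤ (⨆ i, |(xh i).1 - (x i).1|) +
      2 * ∑ i, (dist (xh i).2.1 (x i).2.1 + dist (xh i).2.2 (x i).2.2) :=
  darp_abs_Z_sub_Z_le_general o hgeo x xh
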